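/- arXiv:1509.01863 — 2 statements merged into one kernel-verified Lean document; each statement's English description precedes it below -/
import Mathlib

section
/- For every integer ℓ ≥ 1, the number of partitions of 6ℓ into at most 3 parts each of size at most 4ℓ exceeds the number of partitions of 6ℓ−1 into at most 3 parts each of size at most 4ℓ by exactly 1. -/
/-- `boxPartitions k j n` : the number of partitions of `n` into at most `j` parts,
with each part at most `k`. -/
noncomputable def boxPartitions (k j n : ℕ) : ℕ :=
  Nat.card {π : n.Partition // Multiset.card π.parts ≤ j ∧ ∀ i ∈ π.parts, i ≤ k}

/-!
A partition of `n` into at most three parts, each at most `k`, is a triple `k ≥ a ≥ b ≥ c ≥ 0`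
with `a + b + c = n`. Lowering the largest part by one matches the triples of `n + 1` with
`a > b` to the triples of `n` with `a < k`, so the count for `n + 1` exceeds the count for `n` by
the number of triples of `n + 1` with `a = b` minus the number of triples of `n` with `a = k`. For `k = 4ℓ` and
`n + 1 = 6ℓ` the former are `(a, a, 6ℓ - 2a)` with `2ℓ ≤ a ≤ 3ℓ`, i.e. `ℓ + 1` of them, and the
latter are `(4ℓ, b, 2ℓ - 1 - b)` with `ℓ ≤ b < 2ℓ`, i.e. `ℓ` of them.
-/

open Finset

def boxTriples (k n : ℕ) : Finset (ℕ × ℕ × ℕ) :=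
  (range (k + 1) ×ˢ range (k + 1) ×ˢ range (k + 1)).filter
    fun t => t.2.1 ≤ t.1 ∧ t.2.2 ≤ t.2.1 ∧ t.1 + t.2.1 + t.2.2 = n

@[simp]
lemma mem_boxTriples {k n : ℕ} {t : ℕ × ℕ × ℕ} :
    t ∈ boxTriples k n ↔ t.1 ≤ k ∧ t.2.1 ≤ t.1 ∧ t.2.2 ≤ t.2.1 ∧ t.1 + t.2.1 + t.2.2 = n := by
  simp only [boxTriples, mem_filter, mem_product, mem_range]
  constructor
  · rintro ⟨⟨ha, -⟩, h⟩
    omega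
  · intro h
    omega

def tripleParts (t : ℕ × ℕ × ℕ) : List ℕ := [t.1, t.2.1, t.2.2].filter (· ≠ 0)

def padTriple (l : List ℕ) : ℕ × ℕ × ℕ := (l.getD 0 0, l.getD 1 0, l.getD 2 0)

lemma sum_tripleParts (t : ℕ × ℕ × ℕ) : (tripleParts t).sum = t.1 + t.2.1 + t.2.2 := by
  simp only [tripleParts, List.filter_cons, List.filter_nil]
  split_ifs <;> simp_all [add_assoc]

lemma pos_of_mem_tripleParts {t : ℕ × ℕ × ℕ} {x : ℕ} (hx : x ∈ tripleParts t) : 0 < x :=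
  Nat.pos_of_ne_zero (of_decide_eq_true (List.mem_filter.1 hx).2)

lemma sort_tripleParts {a b c : ℕ} (hba : b ≤ a) (hcb : c ≤ b) :
    Multiset.sort (tripleParts (a, b, c) : Multiset ℕ) (· ≥ ·) = tripleParts (a, b, c) := by
  refine List.mergeSort_eq_self _ (List.Pairwise.filter _ ?_)
  simp [hba, hcb, hcb.trans hba]

lemma padTriple_tripleParts {a b c : ℕ} (hba : b ≤ a) (hcb : c ≤ b) :
    padTriple (tripleParts (a, b, c)) = (a, b, c) := by
  rcases eq_or_ne c 0 with rfl | hc <;> rcases eq_or_ne b 0 with rfl | hb <;>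
    rcases eq_or_ne a 0 with rfl | ha <;>
    first | omega | simp [tripleParts, padTriple, *]

lemma tripleParts_padTriple {l : List ℕ} (hlen : l.length ≤ 3) (hpos : ∀ x ∈ l, 0 < x) :
    tripleParts (padTriple l) = l := by
  rcases l with _ | ⟨a, _ | ⟨b, _ | ⟨c, _ | ⟨d, l⟩⟩⟩⟩ <;>
    simp_all +arith [tripleParts, padTriple, Nat.pos_iff_ne_zero]

lemma padTriple_mem_boxTriples {k : ℕ} {l : List ℕ} (hl : l.Pairwise (· ≥ ·))
    (hlen : l.length ≤ 3) (hk : ∀ x ∈ l, x ≤ k) : padTriple l ∈ boxTriples k l.sum := by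
  rcases l with _ | ⟨a, _ | ⟨b, _ | ⟨c, _ | ⟨d, l⟩⟩⟩⟩ <;> simp_all [padTriple] <;> omega

def boxTriplesEquiv (k n : ℕ) :
    boxTriples k n ≃ {π : n.Partition // Multiset.card π.parts ≤ 3 ∧ ∀ i ∈ π.parts, i ≤ k} where
  toFun
    | ⟨(a, b, c), ht⟩ =>
      have ht : a ≤ k ∧ b ≤ a ∧ c ≤ b ∧ a + b + c = n := mem_boxTriples.1 ht
      ⟨⟨tripleParts (a, b, c), pos_of_mem_tripleParts, by simp [sum_tripleParts, ht.2.2.2]⟩,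
        (List.length_filter_le _ _).trans (by simp), fun x hx => by
          have hx : x = a ∨ x = b ∨ x = c := by simpa using List.mem_of_mem_filter hx
          omega⟩
  invFun π := ⟨padTriple (π.1.parts.sort (· ≥ ·)), by
    have := padTriple_mem_boxTriples (Multiset.pairwise_sort _ _)
      ((Multiset.length_sort _).trans_le π.2.1) fun x hx => π.2.2 x ((Multiset.mem_sort _).1 hx)
    rwa [← Multiset.sum_coe, Multiset.sort_eq, π.1.parts_sum] at this⟩
  left_inv
    | ⟨(a, b, c), ht⟩ => by
      have ht : a ≤ k ∧ b ≤ a ∧ c ≤ b ∧ a + b + c = n := mem_boxTriples.1 ht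
      ext1
      change padTriple (Multiset.sort (tripleParts (a, b, c) : Multiset ℕ) (· ≥ ·)) = (a, b, c)
      rw [sort_tripleParts ht.2.1 ht.2.2.1, padTriple_tripleParts ht.2.1 ht.2.2.1]
  right_inv π := by
    ext1
    apply Nat.Partition.ext
    change (tripleParts (padTriple (π.1.parts.sort (· ≥ ·))) : Multiset ℕ) = π.1.parts
    rw [tripleParts_padTriple, Multiset.sort_eq]
    · exact (Multiset.length_sort _).trans_le π.2.1
    · exact fun x hx => π.1.parts_pos ((Multiset.mem_sort _).1 hx)

lemma boxPartitions_three (k n : ℕ) : boxPartitions k 3 n = #(boxTriples k n) := by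
  rw [boxPartitions, ← Nat.card_congr (boxTriplesEquiv k n), Nat.card_eq_finsetCard]

lemma card_boxTriples_succ_add (k n : ℕ) :
    #(boxTriples k (n + 1)) + #{t ∈ boxTriples k n | t.1 = k} =
      #(boxTriples k n) + #{t ∈ boxTriples k (n + 1) | t.1 = t.2.1} := by
  rw [← card_filter_add_card_filter_not (s := boxTriples k (n + 1)) fun t => t.1 = t.2.1,
    ← card_filter_add_card_filter_not (s := boxTriples k n) fun t => t.1 = k]
  suffices #{t ∈ boxTriples k (n + 1) | ¬t.1 = t.2.1} = #{t ∈ boxTriples k n | ¬t.1 = k} by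
    omega
  refine card_nbij' (fun t => (t.1 - 1, t.2)) (fun t => (t.1 + 1, t.2)) ?_ ?_ ?_ ?_ <;>
    rintro ⟨a, b, c⟩ <;> simp <;> omega

lemma card_boxTriples_fst_eq_snd (ℓ : ℕ) :
    #{t ∈ boxTriples (4 * ℓ) (6 * ℓ) | t.1 = t.2.1} = ℓ + 1 := by
  refine (?_ : _ = #(Icc (2 * ℓ) (3 * ℓ))).trans (by simp; omega)
  refine card_nbij' (·.1) (fun a => (a, a, 6 * ℓ - 2 * a)) ?_ ?_ ?_ ?_ <;>
    intro t <;> simp [Prod.ext_iff] <;> omega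

lemma card_boxTriples_fst_eq (ℓ : ℕ) (hℓ : 1 ≤ ℓ) :
    #{t ∈ boxTriples (4 * ℓ) (6 * ℓ - 1) | t.1 = 4 * ℓ} = ℓ := by
  refine (?_ : _ = #(Ico ℓ (2 * ℓ))).trans (by simp; omega)
  refine card_nbij' (·.2.1) (fun b => (4 * ℓ, b, 2 * ℓ - 1 - b)) ?_ ?_ ?_ ?_ <;>
    intro t <;> simp [Prod.ext_iff] <;> omega

theorem stmt_1 (ℓ : ℕ) (hℓ : 1 ≤ ℓ) :
    boxPartitions (4 * ℓ) 3 (6 * ℓ) = boxPartitions (4 * ℓ) 3 (6 * ℓ - 1) + 1 := by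
  have key := card_boxTriples_succ_add (4 * ℓ) (6 * ℓ - 1)
  rw [show 6 * ℓ - 1 + 1 = 6 * ℓ by omega, card_boxTriples_fst_eq_snd,
    card_boxTriples_fst_eq ℓ hℓ] at key
  rw [boxPartitions_three, boxPartitions_three]
  omega
end

section
/- For k ≡ 2 mod 4, the coefficient of q^{3k/2} in the Gaussian binomial coefficient [k+3 choose k]_q equals the coefficient of q^{3k/2−1} in the same polynomial. -/
open Polynomial

/-- The Gaussian binomial coefficient `[a choose b]_q`, a polynomial in `q`, defined via
the q-Pascal rule `[a+1 choose b+1]_q = [a choose b]_q + q^{b+1} [a choose b+1]_q`. -/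
noncomputable def gaussBinomial : ℕ → ℕ → Polynomial ℕ
  | _, 0 => 1
  | 0, _ + 1 => 0
  | a + 1, b + 1 => gaussBinomial a b + X ^ (b + 1) * gaussBinomial a (b + 1)


lemma gb_zero (a : ℕ) : gaussBinomial a 0 = 1 := by cases a <;> rfl

lemma gb_succ (a b : ℕ) :
    gaussBinomial (a + 1) (b + 1)
      = gaussBinomial a b + X ^ (b + 1) * gaussBinomial a (b + 1) := rfl

lemma gb_of_lt : ∀ a b : ℕ, a < b → gaussBinomial a b = 0
  | 0, _ + 1, _ => rfl
  | a + 1, b + 1, h => by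
      rw [gb_succ, gb_of_lt a b (by omega), gb_of_lt a (b+1) (by omega), mul_zero, add_zero]

lemma gb_diag : ∀ a : ℕ, gaussBinomial a a = 1
  | 0 => rfl
  | a + 1 => by rw [gb_succ, gb_diag a, gb_of_lt a (a+1) (by omega), mul_zero, add_zero]

lemma gb_one : ∀ a : ℕ, gaussBinomial (a+1) a = ∑ t ∈ Finset.range (a+1), X ^ t
  | 0 => by simp [gb_zero]
  | a + 1 => by
      rw [gb_succ, gb_one a, gb_diag, mul_one,
        Finset.sum_range_succ (fun t => (X:Polynomial ℕ)^t) (a+1)]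

lemma coeff_gb_one (i m : ℕ) :
    (gaussBinomial (i+1) i).coeff m = if m ≤ i then 1 else 0 := by
  rw [gb_one, finset_sum_coeff]
  simp only [coeff_X_pow]
  rw [Finset.sum_ite_eq (Finset.range (i+1)) m (fun _ => 1)]
  simp [Nat.lt_succ_iff]

/-- Coefficient formula for `[i+2 choose i]_q`. -/
def f2 (i m : ℕ) : ℕ := if m ≤ 2*i then min m (2*i - m) / 2 + 1 else 0

lemma coeff_gb_two : ∀ i m : ℕ, (gaussBinomial (i+2) i).coeff m = f2 i m
  | 0, m => by
      rw [gb_zero]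
      simp only [coeff_one, f2]
      split_ifs <;> omega
  | i + 1, m => by
      rw [show i+1+2 = (i+2)+1 by ring, gb_succ]
      rw [coeff_add, coeff_gb_two i m, mul_comm, coeff_mul_X_pow']
      rw [show i+2 = (i+1)+1 by ring, coeff_gb_one (i+1) (m - (i+1))]
      unfold f2
      split_ifs <;> omega

lemma coeff_gb_three : ∀ k m : ℕ, (gaussBinomial (k+3) k).coeff m
    = ∑ i ∈ Finset.range (k+1), if i ≤ m then f2 i (m - i) else 0
  | 0, m => by
      rw [gb_zero, Finset.sum_range_one]
      simp only [coeff_one, f2, Nat.zero_le, if_true, Nat.sub_zero]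
      split_ifs <;> omega
  | k + 1, m => by
      rw [show k+1+3 = (k+3)+1 by ring, gb_succ]
      rw [coeff_add, coeff_gb_three k m, mul_comm, coeff_mul_X_pow',
        Finset.sum_range_succ (fun i => if i ≤ m then f2 i (m - i) else 0) (k+1)]
      congr 1
      split_ifs with h
      · rw [show k+3 = (k+1)+2 by ring, coeff_gb_two]
      · rfl

lemma count_parity (a b r : ℕ) (hr : r < 2) : ∀ n : ℕ,
    (∑ i ∈ Finset.range n, if a ≤ i ∧ i ≤ b ∧ i % 2 = r then 1 else 0)
      = (min n (b+1) - a + (if a % 2 = r ∧ a ≤ b then 1 else 0)) / 2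
  | 0 => by
      rw [Finset.sum_range_zero]
      split_ifs <;> omega
  | n + 1 => by
      rw [Finset.sum_range_succ, count_parity a b r hr n]
      split_ifs <;> omega

/-- For `k ≡ 2 (mod 4)`, the coefficient of `q^{3k/2}` in `[k+3 choose k]_q` equals
the coefficient of `q^{3k/2-1}`. -/
theorem stmt_4 (k : ℕ) (h4 : k % 4 = 2) :
    (gaussBinomial (k + 3) k).coeff (3 * k / 2)
      = (gaussBinomial (k + 3) k).coeff (3 * k / 2 - 1) := by
  obtain ⟨j, rfl⟩ : ∃ j, k = 4*j+2 := ⟨(k-2)/4, by omega⟩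
  have h1 : 3 * (4*j+2) / 2 = 6*j+3 := by omega
  rw [h1, show 6*j+3-1 = 6*j+2 from rfl, coeff_gb_three, coeff_gb_three]
  have key : ∀ i ∈ Finset.range (4*j+2+1),
      (if i ≤ 6*j+3 then f2 i (6*j+3 - i) else 0)
        + (if 2*j+1 ≤ i ∧ i ≤ 3*j+1 ∧ i % 2 = 0 then 1 else 0)
      = (if i ≤ 6*j+2 then f2 i (6*j+2 - i) else 0)
        + (if 3*j+2 ≤ i ∧ i ≤ 4*j+2 ∧ i % 2 = 1 then 1 else 0) := by
    intro i hi
    rw [Finset.mem_range] at hi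
    unfold f2
    split_ifs <;> omega
  have hsum := Finset.sum_congr rfl key
  rw [Finset.sum_add_distrib, Finset.sum_add_distrib,
    count_parity (2*j+1) (3*j+1) 0 (by omega) (4*j+2+1),
    count_parity (3*j+2) (4*j+2) 1 (by omega) (4*j+2+1)] at hsum
  split_ifs at hsum <;> omega
end
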